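/- Let Ω ⊂ E be nonempty, closed, and (ε,δ)-subregular at x̂ with respect to S ⊆ Ω ∩ B_δ(x̂). Define U = {x ∈ E : P_Ω x ⊂ B_δ(x̂)}. Then the projector P_Ω is (S, 2ε+2ε²)-firmly nonexpansive on U: for all x ∈ U, x₊ ∈ P_Ω x, x̄ ∈ S, ‖x₊ − x̄‖² + ‖x − x₊‖² ≤ (1 + 2ε + 2ε²)‖x − x̄‖². -/

import Mathlib

open RealInnerProductSpace Metric

noncomputable section

variable {E : Type*} [NormedAddCommGroup E] [InnerProductSpace ℝ E]

/-- The (possibly multivalued) metric projector onto a set. -/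
def projSet (Ω : Set E) (x : E) : Set E :=
  {y | y ∈ Ω ∧ ‖x - y‖ = Metric.infDist x Ω}

/-- The (possibly multivalued) reflector across a set. -/
def reflSet (Ω : Set E) (x : E) : Set E :=
  {w | ∃ y ∈ projSet Ω x, w = (2 : ℝ) • y - x}

/-- Pointwise composition of the two reflectors. -/
def rARB (A B : Set E) (x : E) : Set E :=
  ⋃ y ∈ reflSet B x, reflSet A y

/-- The (possibly multivalued) Douglas–Rachford operator. -/
def TDR (A B : Set E) (x : E) : Set E :=
  {w | ∃ z ∈ rARB A B x, w = ((1 : ℝ) / 2) • (z + x)}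

/-- The proximal normal cone `cone (P_Ω⁻¹ x - x)`. -/
def pnCone (Ω : Set E) (x : E) : Set E :=
  {v | ∃ t : ℝ, 0 ≤ t ∧ ∃ z : E, x ∈ projSet Ω z ∧ v = t • (z - x)}

/-! With `a = ‖x - x₊‖`, `c = ‖x₊ - x̄‖`, `t = ‖x - x̄‖`, expanding `‖x - x̄‖²` around `x₊` and
applying subregularity to the proximal normal `x - x₊` gives `c² + a² ≤ t² + 2εac`. Since `x₊` is
nearest, `a ≤ t`; this forces `c ≤ (1 + ε) t` (for `ε ≤ 1` since `(c - εa)² + (1 - ε²)a² ≤ t²`,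
for `ε > 1` by the triangle inequality), hence `2εac ≤ (2ε + 2ε²) t²`. -/

lemma norm_sub_le_of_mem_projSet {F : Type*} [NormedAddCommGroup F] {Ω : Set F} {x xp y : F}
    (hxp : xp ∈ projSet Ω x) (hy : y ∈ Ω) : ‖x - xp‖ ≤ ‖x - y‖ := by
  rw [hxp.2, ← dist_eq_norm]
  exact infDist_le_dist_of_mem hy

lemma sub_mem_pnCone_of_mem_projSet {Ω : Set E} {x xp : E} (hxp : xp ∈ projSet Ω x) :
    x - xp ∈ pnCone Ω xp :=
  ⟨1, zero_le_one, x, hxp, (one_smul ℝ _).symm⟩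

lemma norm_sq_add_norm_sq_le_of_inner_le {ε : ℝ} {x p y : E}
    (h : ⟪x - p, y - p⟫ ≤ ε * ‖x - p‖ * ‖y - p‖) :
    ‖p - y‖ ^ 2 + ‖x - p‖ ^ 2 ≤ ‖x - y‖ ^ 2 + 2 * ε * ‖x - p‖ * ‖p - y‖ := by
  have hexpand : ‖x - y‖ ^ 2 = ‖x - p‖ ^ 2 - 2 * ⟪x - p, y - p⟫ + ‖y - p‖ ^ 2 := by
    rw [← norm_sub_sq_real, sub_sub_sub_cancel_right]
  rw [norm_sub_rev p y]
  linarith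

lemma le_one_add_mul_of_sq_add_sq_le {ε a c t : ℝ} (hε : 0 ≤ ε) (ha : 0 ≤ a) (hat : a ≤ t)
    (hct : c ≤ a + t) (h : c ^ 2 + a ^ 2 ≤ t ^ 2 + 2 * ε * a * c) :
    c ≤ (1 + ε) * t := by
  have ht : 0 ≤ t := ha.trans hat
  rcases le_or_gt ε 1 with hε1 | hε1
  · have hsq : (c - ε * a) ^ 2 ≤ t ^ 2 := by
      nlinarith [mul_le_mul hε1 hε1 hε zero_le_one, sq_nonneg a]
    have hc : c - ε * a ≤ t := le_of_sq_le_sq hsq ht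
    nlinarith [mul_le_mul_of_nonneg_left hat hε]
  · nlinarith

theorem proj_subregular_firmly_nonexpansive_general
    (Ω : Set E)
    (S : Set E) (xhat : E) (ε δ : ℝ) (hε : 0 ≤ ε)
    (hSsub : S ⊆ Ω ∩ Metric.closedBall xhat δ)
    (hsub : ∀ x ∈ Metric.closedBall xhat δ ∩ Ω, ∀ xbar ∈ S ∩ Metric.closedBall xhat δ,
        ∀ v ∈ pnCone Ω x, ⟪v, xbar - x⟫ ≤ ε * ‖v‖ * ‖xbar - x‖) :
    ∀ x ∈ {x : E | projSet Ω x ⊆ Metric.closedBall xhat δ},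
      ∀ xp ∈ projSet Ω x, ∀ xbar ∈ S,
        ‖xp - xbar‖ ^ 2 + ‖x - xp‖ ^ 2 ≤ (1 + 2 * ε + 2 * ε ^ 2) * ‖x - xbar‖ ^ 2 := by
  intro x hx xp hxp xbar hxbar
  obtain ⟨hxbarΩ, hxbarB⟩ := hSsub hxbar
  have hnormal : ⟪x - xp, xbar - xp⟫ ≤ ε * ‖x - xp‖ * ‖xbar - xp‖ :=
    hsub xp ⟨hx hxp, hxp.1⟩ xbar ⟨hxbar, hxbarB⟩ _ (sub_mem_pnCone_of_mem_projSet hxp)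
  have hnearest : ‖x - xp‖ ≤ ‖x - xbar‖ := norm_sub_le_of_mem_projSet hxp hxbarΩ
  have htriangle : ‖xp - xbar‖ ≤ ‖x - xp‖ + ‖x - xbar‖ := by
    simpa only [norm_sub_rev x xp] using norm_sub_le_norm_sub_add_norm_sub xp x xbar
  have hcosine := norm_sq_add_norm_sq_le_of_inner_le hnormal
  have hbound : ‖xp - xbar‖ ≤ (1 + ε) * ‖x - xbar‖ :=
    le_one_add_mul_of_sq_add_sq_le hε (norm_nonneg _) hnearest htriangle hcosine
  calc ‖xp - xbar‖ ^ 2 + ‖x - xp‖ ^ 2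
      ≤ ‖x - xbar‖ ^ 2 + 2 * ε * ‖x - xp‖ * ‖xp - xbar‖ := hcosine
    _ ≤ ‖x - xbar‖ ^ 2 + 2 * ε * ‖x - xbar‖ * ((1 + ε) * ‖x - xbar‖) := by gcongr
    _ = (1 + 2 * ε + 2 * ε ^ 2) * ‖x - xbar‖ ^ 2 := by ring

/-- The projector onto an `(ε,δ)`-subregular set is `(S, 2ε+2ε²)`-firmly nonexpansive on `U`. -/
theorem proj_subregular_firmly_nonexpansive
    (Ω : Set E) (hΩ : Ω.Nonempty) (hΩc : IsClosed Ω)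
    (S : Set E) (xhat : E) (ε δ : ℝ) (hε : 0 ≤ ε) (hδ : 0 < δ)
    (hSsub : S ⊆ Ω ∩ Metric.closedBall xhat δ)
    (hsub : ∀ x ∈ Metric.closedBall xhat δ ∩ Ω, ∀ xbar ∈ S ∩ Metric.closedBall xhat δ,
        ∀ v ∈ pnCone Ω x, ⟪v, xbar - x⟫ ≤ ε * ‖v‖ * ‖xbar - x‖) :
    ∀ x ∈ {x : E | projSet Ω x ⊆ Metric.closedBall xhat δ},
      ∀ xp ∈ projSet Ω x, ∀ xbar ∈ S,
        ‖xp - xbar‖ ^ 2 + ‖x - xp‖ ^ 2 ≤ (1 + 2 * ε + 2 * ε ^ 2) * ‖x - xbar‖ ^ 2 :=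
  proj_subregular_firmly_nonexpansive_general Ω S xhat ε δ hε hSsub hsub
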